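/- arXiv:1403.5491 — 3 statements merged into one kernel-verified Lean document; each statement's English description precedes it below -/
import Mathlib

section
/- Let ≺ be a transitive relation on ℕ that is irreflexive (k ⊀ k for all k). Suppose a_1,...,a_L and b_1,...,b_L are indices such that every a_l appears among the b's, i.e. {a_l : l} ⊆ {b_l : l}. If a_l ≺ b_l holds for all l = 1,...,L with L ≥ 1, then a contradiction follows; equivalently, the product of indicators ∏_{l=1}^L 1_{a_l ≺ b_l} is identically zero. (Proof idea: the condition A ⊆ B forces a cycle l_1,...,l_k with a_{l_i} = b_{l_{i+1}}, and transitivity then yields b_{l_1} ≺ b_{l_1}, contradicting irreflexivity.) -/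
/-- If `≺` is a transitive irreflexive relation on `ℕ` and
`(a_l)_{l=1}^L`, `(b_l)_{l=1}^L` (with `L ≥ 1`) are such that every `a_l` appears among
the `b`'s, then it is impossible that `a_l ≺ b_l` for all `l`. -/
theorem stmt_6 (r : ℕ → ℕ → Prop) (htrans : Transitive r) (hirr : ∀ k, ¬ r k k)
    (L : ℕ) (hL : 1 ≤ L) (a b : Fin L → ℕ)
    (hAB : ∀ l, a l ∈ Set.range b)
    (h : ∀ l, r (a l) (b l)) : False := by
  choose f hf using hAB
  -- hf : ∀ l, b (f l) = a l
  have hstep : ∀ l, r (b (f l)) (b l) := fun l => (hf l) ▸ h l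
  set l0 : Fin L := ⟨0, hL⟩
  have hchain : ∀ j i, i < j → r (b (f^[j] l0)) (b (f^[i] l0)) := by
    intro j
    induction j with
    | zero => intro i hi; omega
    | succ j ih =>
      intro i hi
      have h1 : r (b (f^[j+1] l0)) (b (f^[j] l0)) := by
        rw [Function.iterate_succ_apply']; exact hstep _
      rcases Nat.lt_succ_iff_lt_or_eq.mp hi with h2 | h2
      · exact htrans h1 (ih i h2)
      · rw [h2]; exact h1
  obtain ⟨i, j, hne, heq⟩ := Finite.exists_ne_map_eq_of_infinite (fun n : ℕ => f^[n] l0)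
  rcases hne.lt_or_gt with hij | hij
  · exact hirr _ (heq ▸ hchain j i hij)
  · exact hirr _ (heq ▸ hchain i j hij)
end

section
/- The subspace 𝕋_e of 𝕋 consisting of rooted locally finite trees with finitely many ends is not topologically complete; that is, 𝕋_e is not a G_δ subset of the complete metric space 𝕋. -/
open scoped Classical

/-- A rooted, locally finite tree in the graph-theoretic sense. -/
structure LFTree : Type 1 where
  V : Type
  G : SimpleGraph V
  root : V
  isTree : G.IsTree
  locallyFinite : ∀ v, (G.neighborSet v).Finite

/-- The set of vertices at graph distance at most `k` from the root. -/
def LFTree.ball (T : LFTree) (k : ℕ) : Set T.V :=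
  {v | T.G.dist T.root v ≤ k}

lemma LFTree.root_mem_ball (T : LFTree) (k : ℕ) : T.root ∈ T.ball k := by
  simp [LFTree.ball, SimpleGraph.dist_self]

/-- `T^{≤k} = T'^{≤k}`: the restrictions to the balls of radius `k` around the roots are
isomorphic as rooted trees. -/
def TruncEquiv (T T' : LFTree) (k : ℕ) : Prop :=
  ∃ e : (T.G.induce (T.ball k)) ≃g (T'.G.induce (T'.ball k)),
    (e ⟨T.root, T.root_mem_ball k⟩ : T'.V) = T'.root

/-- Isomorphism of rooted trees. -/
def RootedIso (T T' : LFTree) : Prop :=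
  ∃ e : T.G ≃g T'.G, e T.root = T'.root

/-- The space `𝕋` of rooted locally finite trees up to root-preserving isomorphism. -/
def TreeSpace : Type 1 := Quot RootedIso

/-- The metric `d_𝕋(T₁,T₂) = Σ_k 2^{−k} 1_{T₁^{≤k} ≠ T₂^{≤k}}`. -/
noncomputable def treeDist (T T' : LFTree) : ℝ :=
  ∑' k : ℕ, if TruncEquiv T T' k then 0 else (1 / 2 : ℝ) ^ k

/-- The ends of a rooted tree: infinite self-avoiding paths starting from the root. -/
def LFTree.Ends (T : LFTree) : Set (ℕ → T.V) :=
  {f | Function.Injective f ∧ f 0 = T.root ∧ ∀ n, T.G.Adj (f n) (f (n + 1))}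

/-- The subspace `𝕋_e` of trees with finitely many ends. -/
def TreeSpaceE : Set TreeSpace :=
  {x | ∃ T : LFTree, x = Quot.mk RootedIso T ∧ T.Ends.Finite}

/-!
Encode `S ⊆ ℕ` by the comb with teeth at `S`: a ray (the spine) with a further ray attached at
each `s ∈ S`. The comb has finitely many ends iff `S` is finite, and combs whose tooth sets agree
up to `k` have isomorphic `k`-balls, so `x ↦ comb {n | x n}` is continuous from Cantor space
`ℕ → Bool` to `𝕋`. If `𝕋_e` were a `G_δ`, so would be its preimage, the set of finitely supported
sequences. But that set is countable and dense with dense complement, which Baire's theorem rules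
out.
-/

open Filter Topology

namespace SimpleGraph

structure IsDepthFunction {V : Type*} (G : SimpleGraph V) (r : V) (h : V → ℕ) : Prop where
  root : h r = 0
  eq_root : ∀ {v}, h v = 0 → v = r
  adj : ∀ {a b}, G.Adj a b → h a = h b + 1 ∨ h b = h a + 1
  exists_parent : ∀ {v}, 0 < h v → ∃ u, G.Adj u v ∧ h u + 1 = h v
  parent_unique : ∀ {v a b}, G.Adj v a → G.Adj v b → h a + 1 = h v → h b + 1 = h v → a = b

namespace IsDepthFunction

variable {V : Type*} {G : SimpleGraph V} {r : V} {h : V → ℕ}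

theorem exists_walk_length_eq (hG : G.IsDepthFunction r h) (v : V) :
    ∃ p : G.Walk r v, p.length = h v := by
  induction hn : h v generalizing v with
  | zero => exact hG.eq_root hn ▸ ⟨.nil, rfl⟩
  | succ n ih =>
    obtain ⟨u, hadj, hu⟩ := hG.exists_parent (v := v) (by omega)
    obtain ⟨p, hp⟩ := ih u (by omega)
    exact ⟨p.concat hadj, by rw [Walk.length_concat, hp]⟩

theorem le_add_length (hG : G.IsDepthFunction r h) {u v : V} (p : G.Walk u v) :
    h v ≤ h u + p.length := by
  induction p with
  | nil => simp
  | cons hadj p ih =>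
    have := hG.adj hadj
    rw [Walk.length_cons]
    omega

theorem dist_eq (hG : G.IsDepthFunction r h) (v : V) : G.dist r v = h v := by
  obtain ⟨p, hp⟩ := hG.exists_walk_length_eq v
  obtain ⟨q, hq⟩ := Reachable.exists_walk_length_eq_dist ⟨p⟩
  have := hG.le_add_length q
  have := dist_le p
  rw [hG.root] at *
  omega

theorem connected [Nonempty V] (hG : G.IsDepthFunction r h) : G.Connected :=
  (connected_iff_exists_forall_reachable G).2
    ⟨r, fun v => (hG.exists_walk_length_eq v).elim fun p _ => ⟨p⟩⟩

/-- A cycle through a vertex `u` of maximal depth would give `u` two distinct parents. -/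
theorem isAcyclic (hG : G.IsDepthFunction r h) : G.IsAcyclic := by
  intro v c hc
  obtain ⟨u, hu, hmax⟩ := c.support.toFinset.exists_max_image h ⟨v, by simp⟩
  rw [List.mem_toFinset] at hu
  set c' := c.rotate u hu
  have hc' : c'.IsCycle := hc.rotate hu
  have hlow : ∀ x ∈ c'.support, G.Adj u x → h x + 1 = h u := by
    intro x hx hadj
    have := hG.adj hadj
    rcases (Walk.mem_support_iff _).1 hx with rfl | hx
    · omega
    · have := hmax x (List.mem_toFinset.2
        (List.mem_of_mem_tail ((c.support_rotate u hu).mem_iff.1 hx)))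
      omega
  have hsnd := c'.adj_snd hc'.not_nil
  have hpen := (c'.adj_penultimate hc'.not_nil).symm
  exact hc'.snd_ne_penultimate <| hG.parent_unique hsnd hpen
    (hlow _ (c'.getVert_mem_support _) hsnd) (hlow _ (c'.getVert_mem_support _) hpen)

theorem isTree [Nonempty V] (hG : G.IsDepthFunction r h) : G.IsTree :=
  ⟨hG.connected, hG.isAcyclic⟩

theorem depth_apply_of_injective (hG : G.IsDepthFunction r h) {f : ℕ → V}
    (hf : Function.Injective f) (hf0 : f 0 = r) (hadj : ∀ n, G.Adj (f n) (f (n + 1))) (n : ℕ) :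
    h (f n) = n := by
  have hsucc : ∀ n, h (f (n + 1)) = h (f n) + 1 := by
    intro n
    induction n with
    | zero => have := hG.adj (hadj 0); rw [hf0, hG.root] at *; omega
    | succ n ih =>
      rcases hG.adj (hadj (n + 1)) with hback | hfwd
      · exact absurd (hf (hG.parent_unique (hadj n).symm (hadj (n + 1)) ih.symm hback.symm))
          (by omega)
      · exact hfwd
  induction n with
  | zero => rw [hf0, hG.root]
  | succ n ih => rw [hsucc, ih]

theorem eq_of_eq_of_le (hG : G.IsDepthFunction r h) {f g : ℕ → V}
    (hf : ∀ n, h (f n) = n) (hg : ∀ n, h (g n) = n)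
    (hfa : ∀ n, G.Adj (f n) (f (n + 1))) (hga : ∀ n, G.Adj (g n) (g (n + 1)))
    {m n : ℕ} (hm : f m = g m) (hn : n ≤ m) : f n = g n := by
  induction hn using Nat.decreasingInduction with
  | self => exact hm
  | of_succ k _ ih =>
    exact hG.parent_unique (hfa k).symm (ih ▸ (hga k).symm) (by rw [hf, hf]) (by rw [hg, hf])

end IsDepthFunction

end SimpleGraph

section Comb

variable {S : Set ℕ}

/-- The comb with teeth at `S`: the spine `ℕ × {0}` together with a ray `{s} × ℕ` for each
`s ∈ S`. -/
abbrev CombV (S : Set ℕ) : Type := {p : ℕ × ℕ // p.2 = 0 ∨ p.1 ∈ S}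

def combGraph (S : Set ℕ) : SimpleGraph (CombV S) where
  Adj a b := (a.1.1 = b.1.1 ∧ (a.1.2 = b.1.2 + 1 ∨ b.1.2 = a.1.2 + 1)) ∨
    (a.1.2 = 0 ∧ b.1.2 = 0 ∧ (a.1.1 = b.1.1 + 1 ∨ b.1.1 = a.1.1 + 1))
  symm := ⟨fun _ _ => by omega⟩
  loopless := ⟨fun _ => by omega⟩

theorem combGraph_adj {a b : CombV S} : (combGraph S).Adj a b ↔
    (a.1.1 = b.1.1 ∧ (a.1.2 = b.1.2 + 1 ∨ b.1.2 = a.1.2 + 1)) ∨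
      (a.1.2 = 0 ∧ b.1.2 = 0 ∧ (a.1.1 = b.1.1 + 1 ∨ b.1.1 = a.1.1 + 1)) :=
  Iff.rfl

def combRoot (S : Set ℕ) : CombV S := ⟨(0, 0), Or.inl rfl⟩

def combDepth (v : CombV S) : ℕ := v.1.1 + v.1.2

theorem isDepthFunction_combGraph (S : Set ℕ) :
    (combGraph S).IsDepthFunction (combRoot S) combDepth where
  root := rfl
  eq_root {v} hv := by
    simp only [combDepth] at hv
    exact Subtype.ext (Prod.ext (show v.1.1 = 0 by omega) (show v.1.2 = 0 by omega))
  adj {a b} hab := by simp only [combGraph_adj, combDepth] at *; omega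
  exists_parent {v} hv := by
    by_cases hj : v.1.2 = 0
    · exact ⟨⟨(v.1.1 - 1, 0), Or.inl rfl⟩,
        by simp only [combGraph_adj, combDepth, true_and] at *; omega⟩
    · exact ⟨⟨(v.1.1, v.1.2 - 1), Or.inr (v.2.resolve_left hj)⟩,
        by simp only [combGraph_adj, combDepth, true_and] at *; omega⟩
  parent_unique {v a b} hva hvb ha hb := by
    simp only [combGraph_adj, combDepth] at *
    exact Subtype.ext (Prod.ext (by omega) (by omega))

theorem finite_setOf_combDepth_le (S : Set ℕ) (M : ℕ) :
    {v : CombV S | combDepth v ≤ M}.Finite :=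
  ((Set.finite_Icc ((0, 0) : ℕ × ℕ) (M, M)).preimage Subtype.val_injective.injOn).subset
    fun v hv => by
      simp only [combDepth, Set.mem_ofPred_eq] at hv
      simp only [Set.mem_preimage, Set.mem_Icc, Prod.le_def, zero_le, and_self, true_and]
      omega

instance (S : Set ℕ) : Nonempty (CombV S) := ⟨combRoot S⟩

def Comb (S : Set ℕ) : LFTree where
  V := CombV S
  G := combGraph S
  root := combRoot S
  isTree := (isDepthFunction_combGraph S).isTree
  locallyFinite v := (finite_setOf_combDepth_le S (combDepth v + 1)).subset fun u hu => by
    have := (isDepthFunction_combGraph S).adj hu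
    simp only [Set.mem_ofPred_eq]
    omega

theorem mem_ball_comb {k : ℕ} {v : CombV S} : v ∈ (Comb S).ball k ↔ combDepth v ≤ k := by
  show (combGraph S).dist (combRoot S) v ≤ k ↔ _
  rw [(isDepthFunction_combGraph S).dist_eq]

def combBallMap {S S' : Set ℕ} {k : ℕ} (h : ∀ i ≤ k, i ∈ S → i ∈ S')
    (v : (Comb S).ball k) : (Comb S').ball k :=
  have hv : combDepth v.1 ≤ k := mem_ball_comb.1 v.2
  ⟨⟨v.1.1, v.1.2.imp_right (h _ (by simp only [combDepth] at hv; omega))⟩, mem_ball_comb.2 hv⟩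

theorem truncEquiv_comb {S S' : Set ℕ} {k : ℕ} (h : ∀ i ≤ k, (i ∈ S ↔ i ∈ S')) :
    TruncEquiv (Comb S) (Comb S') k :=
  ⟨{ toFun := combBallMap fun i hi => (h i hi).1
     invFun := combBallMap fun i hi => (h i hi).2
     left_inv _ := rfl
     right_inv _ := rfl
     map_rel_iff' := Iff.rfl }, rfl⟩

theorem combDepth_apply_of_mem_ends {f : ℕ → CombV S} (hf : f ∈ (Comb S).Ends) (n : ℕ) :
    combDepth (f n) = n :=
  (isDepthFunction_combGraph S).depth_apply_of_injective hf.1 hf.2.1 hf.2.2 n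

theorem combGraph_child_unique {N : ℕ} (hN : N ∈ upperBounds S) {v a b : CombV S}
    (hv : N < combDepth v) (ha : (combGraph S).Adj v a) (hb : (combGraph S).Adj v b)
    (ha' : combDepth a = combDepth v + 1) (hb' : combDepth b = combDepth v + 1) : a = b := by
  have := a.2.imp_right (@hN _)
  have := b.2.imp_right (@hN _)
  simp only [combGraph_adj, combDepth] at *
  exact Subtype.ext (Prod.ext (by omega) (by omega))

/-- Above the last tooth no branching is left, so an end is determined by one of its vertices. -/
theorem eq_of_mem_ends_comb {N : ℕ} (hN : N ∈ upperBounds S) {f g : ℕ → CombV S}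
    (hf : f ∈ (Comb S).Ends) (hg : g ∈ (Comb S).Ends) (hfg : f (N + 1) = g (N + 1)) : f = g := by
  have hfd := combDepth_apply_of_mem_ends hf
  have hgd := combDepth_apply_of_mem_ends hg
  funext n
  rcases le_total n (N + 1) with hn | hn
  · exact (isDepthFunction_combGraph S).eq_of_eq_of_le hfd hgd hf.2.2 hg.2.2 hfg hn
  · obtain ⟨k, rfl⟩ := Nat.exists_eq_add_of_le hn
    clear hn
    induction k with
    | zero => exact hfg
    | succ k ih =>
      rw [← add_assoc]
      exact combGraph_child_unique hN (by rw [hfd]; omega) (hf.2.2 _) (ih ▸ hg.2.2 _)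
        (by rw [hfd, hfd]) (by rw [hgd, hfd])

theorem finite_ends_comb (hS : S.Finite) : (Comb S).Ends.Finite := by
  obtain ⟨N, hN⟩ := hS.bddAbove
  refine Set.Finite.of_finite_image (f := fun f => f (N + 1))
    ((finite_setOf_combDepth_le S (N + 1)).subset ?_)
    fun f hf g hg => eq_of_mem_ends_comb hN hf hg
  rintro _ ⟨f, hf, rfl⟩
  exact (combDepth_apply_of_mem_ends hf _).le

def combRay {s : ℕ} (hs : s ∈ S) (n : ℕ) : CombV S :=
  ⟨(min n s, n - s), (le_total n s).imp (fun h => by omega) fun h => by rwa [min_eq_right h]⟩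

theorem combRay_mem_ends {s : ℕ} (hs : s ∈ S) : combRay hs ∈ (Comb S).Ends := by
  refine ⟨fun m n hmn => ?_, Subtype.ext (by simp [combRay, combRoot, Comb]), fun n => ?_⟩
  · have := congrArg combDepth hmn
    simp only [combDepth, combRay] at this
    omega
  · show (combGraph S).Adj _ _
    simp only [combGraph_adj, combRay]
    omega

theorem infinite_ends_comb (hS : S.Infinite) : (Comb S).Ends.Infinite := by
  have := hS.to_subtype
  refine Set.infinite_of_injective_forall_mem (f := fun s : S => combRay s.2)
    (fun a b hab => Subtype.ext ?_) fun s => combRay_mem_ends s.2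
  have := congrArg (fun v : CombV S => v.1.1) (congrFun hab (a + b))
  simp only [combRay] at this
  omega

theorem finite_ends_comb_iff : (Comb S).Ends.Finite ↔ S.Finite :=
  ⟨fun h => Set.not_infinite.1 fun hS => infinite_ends_comb hS h, finite_ends_comb⟩

end Comb

theorem rootedIso_equivalence : Equivalence RootedIso where
  refl _ := ⟨.refl, rfl⟩
  symm := fun ⟨e, he⟩ => ⟨e.symm, by rw [← he, RelIso.symm_apply_apply]⟩
  trans := fun ⟨e, he⟩ ⟨e', he'⟩ => ⟨e.trans e', by rw [RelIso.trans_apply, he, he']⟩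

theorem RootedIso.ends_finite {T T' : LFTree} (h : RootedIso T T') (hT' : T'.Ends.Finite) :
    T.Ends.Finite := by
  obtain ⟨e, he⟩ := h
  refine (hT'.preimage e.injective.comp_left.injOn).subset fun f ⟨hinj, hf0, hadj⟩ =>
    ⟨e.injective.comp hinj, by simp [hf0, he], fun n => e.map_adj_iff.2 (hadj n)⟩

theorem mk_mem_treeSpaceE_iff {T : LFTree} : Quot.mk RootedIso T ∈ TreeSpaceE ↔ T.Ends.Finite :=
  ⟨fun ⟨_, hT, hfin⟩ => (rootedIso_equivalence.eqvGen_iff.1 (Quot.eq.1 hT)).ends_finite hfin,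
    fun h => ⟨T, rfl, h⟩⟩

theorem treeDist_le_of_truncEquiv {T T' : LFTree} {K : ℕ} (h : ∀ k ≤ K, TruncEquiv T T' k) :
    treeDist T T' ≤ 2⁻¹ ^ K := by
  have hle : ∀ k, (if TruncEquiv T T' k then 0 else (1 / 2 : ℝ) ^ k) ≤
      if K + 1 ≤ k then (2⁻¹ : ℝ) ^ k else 0 := by
    intro k
    by_cases hk : K + 1 ≤ k
    · split_ifs <;> simp
    · simp [hk, h k (by omega)]
  have hsum : Summable fun k => if K + 1 ≤ k then (2⁻¹ : ℝ) ^ k else 0 :=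
    summable_geometric_two.of_nonneg_of_le (fun k => by split_ifs <;> positivity)
      fun k => by split_ifs <;> simp
  calc treeDist T T' ≤ ∑' k, if K + 1 ≤ k then (2⁻¹ : ℝ) ^ k else 0 :=
        Summable.tsum_le_tsum hle (hsum.of_nonneg_of_le
          (fun k => by split_ifs <;> positivity) hle) hsum
    _ = 2⁻¹ ^ K := by rw [tsum_geometric_inv_two_ge, pow_succ]; ring

def combPoint (x : ℕ → Bool) : TreeSpace := Quot.mk RootedIso (Comb {n | x n})

theorem preimage_combPoint_treeSpaceE :
    combPoint ⁻¹' TreeSpaceE = {x : ℕ → Bool | {n | x n}.Finite} :=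
  Set.ext fun _ => mk_mem_treeSpaceE_iff.trans finite_ends_comb_iff

theorem continuous_combPoint [MetricSpace TreeSpace]
    (hdist : ∀ T T' : LFTree, dist (α := TreeSpace) (Quot.mk _ T) (Quot.mk _ T') = treeDist T T') :
    Continuous combPoint := by
  refine continuous_iff_continuousAt.2 fun x => Metric.tendsto_nhds.2 fun ε hε => ?_
  obtain ⟨K, hK⟩ := exists_pow_lt_of_lt_one hε (by norm_num : (2⁻¹ : ℝ) < 1)
  have hagree : ∀ᶠ y in 𝓝 x, ∀ i ∈ Set.Iic K, y i = x i :=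
    (Set.finite_Iic K).eventually_all.2 fun i _ =>
      (continuous_apply i).continuousAt ((isOpen_discrete {x i}).mem_nhds rfl)
  filter_upwards [hagree] with y hy
  rw [combPoint, combPoint, hdist]
  exact (treeDist_le_of_truncEquiv fun k hk => truncEquiv_comb fun i hi => by
    simp [hy i (hi.trans hk)]).trans_lt hK

theorem Set.Countable.not_isGδ_of_dense {X : Type*} [TopologicalSpace X] [BaireSpace X]
    [T1Space X] [Nonempty X] {s : Set X} (hs : s.Countable) (hd : Dense s) (hdc : Dense sᶜ) :
    ¬IsGδ s := fun hG => by
  simpa using (hd.inter_of_Gδ hG hs.isGδ_compl hdc).nonempty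

theorem tendsto_ite_lt_atTop {E : Type*} [TopologicalSpace E] (x : ℕ → E) (b : E) :
    Tendsto (fun K n => if n < K then x n else b) atTop (𝓝 x) :=
  tendsto_pi_nhds.2 fun n => tendsto_const_nhds.congr' <|
    (eventually_gt_atTop n).mono fun _ hK => (if_pos hK).symm

theorem not_isGδ_setOf_finite : ¬IsGδ {x : ℕ → Bool | {n | x n}.Finite} := by
  refine Set.Countable.not_isGδ_of_dense ?_ (fun x => ?_) fun x => ?_
  · exact Set.Countable.ofPred_finite.preimage fun x y hxy =>
      funext fun n => Bool.eq_iff_iff.2 (Set.ext_iff.1 hxy n)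
  · refine mem_closure_of_tendsto (tendsto_ite_lt_atTop x false) (.of_forall fun K => ?_)
    exact (Set.finite_lt_nat K).subset fun n hn => by
      simp only [Bool.if_false_right, Bool.and_eq_true, decide_eq_true_eq, Set.mem_ofPred_eq] at hn
      exact hn.1
  · refine mem_closure_of_tendsto (tendsto_ite_lt_atTop x true) (.of_forall fun K => ?_)
    exact Set.infinite_of_forall_exists_gt fun a => ⟨max a K + 1, if_neg (by omega), by omega⟩

/-- the subspace `𝕋_e ⊆ 𝕋` of trees with finitely many ends is not a
`G_δ` subset of the complete metric space `(𝕋, d_𝕋)`; hence, by Mazurkiewicz's theorem,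
it is not topologically complete. -/
theorem stmt_11 (m : MetricSpace TreeSpace)
    (hdist : ∀ T T' : LFTree, m.dist (Quot.mk _ T) (Quot.mk _ T') = treeDist T T') :
    ¬∃ Gs : ℕ → Set TreeSpace,
        (∀ n, @IsOpen TreeSpace m.toUniformSpace.toTopologicalSpace (Gs n)) ∧
        TreeSpaceE = ⋂ n, Gs n := by
  let _ := m
  rintro ⟨Gs, hopen, hE⟩
  have hGδ : IsGδ TreeSpaceE := hE ▸ .iInter_of_isOpen hopen
  exact not_isGδ_setOf_finite
    (preimage_combPoint_treeSpaceE ▸ hGδ.preimage (continuous_combPoint hdist))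
end

section
/- On the space of compact rooted measured ℝ-trees whose measure dominates the length measure, the Gromov–Prokhorov and Gromov–Hausdorff–Prokhorov distances are comparable: d_{GP}^c(𝒯, 𝒯') ≤ d_{GHP}^c(𝒯, 𝒯') ≤ 3 · d_{GP}^c(𝒯, 𝒯') for all such trees 𝒯, 𝒯'. -/
/-- A compact rooted measured ℝ-tree whose measure `μ` dominates the length measure `ℓ`:
a compact, uniquely geodesic metric space without loops, with root, geodesics `γ`,
length measure `ℓ` (characterized by `ℓ(⟧a,b⟦) = d(a,b)` and `ℓ(skeletonᶜ) = 0`)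
and a finite Borel measure `μ ≥ ℓ`. -/
structure CMRTree : Type 1 where
  V : Type
  [ms : MetricSpace V]
  [mb : MeasurableSpace V]
  [bs : BorelSpace V]
  [compact : CompactSpace V]
  root : V
  μ : MeasureTheory.Measure V
  finiteμ : MeasureTheory.IsFiniteMeasure μ
  γ : V → V → ℝ → V
  geod0 : ∀ a b, γ a b 0 = a
  geod1 : ∀ a b, γ a b (dist a b) = b
  geodIso : ∀ a b, ∀ s ∈ Set.Icc (0 : ℝ) (dist a b), ∀ t ∈ Set.Icc (0 : ℝ) (dist a b),
    dist (γ a b s) (γ a b t) = |s - t|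
  geodUniq : ∀ a b (f : ℝ → V), f 0 = a → f (dist a b) = b →
    (∀ s ∈ Set.Icc (0 : ℝ) (dist a b), ∀ t ∈ Set.Icc (0 : ℝ) (dist a b),
      dist (f s) (f t) = |s - t|) →
    ∀ s ∈ Set.Icc (0 : ℝ) (dist a b), f s = γ a b s
  noLoops : ∀ a b (q r : ℝ → V), ContinuousOn q (Set.Icc 0 1) →
    ContinuousOn r (Set.Icc 0 1) → Set.InjOn q (Set.Icc 0 1) → Set.InjOn r (Set.Icc 0 1) →
    q 0 = a → q 1 = b → r 0 = a → r 1 = b → q '' Set.Icc 0 1 = r '' Set.Icc 0 1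
  ℓ : MeasureTheory.Measure V
  lenSeg : ∀ a b, ℓ (γ a b '' Set.Ioo 0 (dist a b)) = ENNReal.ofReal (dist a b)
  lenSkel : ℓ ((⋃ x, γ root x '' Set.Ico 0 (dist root x))ᶜ) = 0
  dom : ℓ ≤ μ

attribute [instance] CMRTree.ms CMRTree.mb CMRTree.bs CMRTree.compact

/-- A pair of isometric embeddings of two trees into a common complete separable metric
space `Z`. -/
structure CommonEmbedding (T T' : CMRTree) : Type 1 where
  Z : Type
  [ms : MetricSpace Z]
  [mb : MeasurableSpace Z]
  [bs : BorelSpace Z]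
  [complete : CompleteSpace Z]
  [separable : TopologicalSpace.SeparableSpace Z]
  φ : T.V → Z
  φ' : T'.V → Z
  isom : Isometry φ
  isom' : Isometry φ'

attribute [instance] CommonEmbedding.ms CommonEmbedding.mb CommonEmbedding.bs

/-- The GHP cost of a common embedding:
`d(φρ,φ'ρ') + d_H(φ𝒱,φ'𝒱') + d_P(φ_*μ,φ'_*μ')`. -/
noncomputable def CommonEmbedding.ghpCost {T T' : CMRTree} (e : CommonEmbedding T T') : ℝ :=
  dist (e.φ T.root) (e.φ' T'.root)
    + Metric.hausdorffDist (Set.range e.φ) (Set.range e.φ')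
    + MeasureTheory.levyProkhorovDist (MeasureTheory.Measure.map e.φ T.μ) (MeasureTheory.Measure.map e.φ' T'.μ)

/-- The GP cost of a common embedding: as the GHP cost but omitting the Hausdorff term. -/
noncomputable def CommonEmbedding.gpCost {T T' : CMRTree} (e : CommonEmbedding T T') : ℝ :=
  dist (e.φ T.root) (e.φ' T'.root)
    + MeasureTheory.levyProkhorovDist (MeasureTheory.Measure.map e.φ T.μ) (MeasureTheory.Measure.map e.φ' T'.μ)

/-- The Gromov–Hausdorff–Prokhorov distance `d_{GHP}^c`. -/
noncomputable def ghpDist (T T' : CMRTree) : ℝ :=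
  sInf {r : ℝ | ∃ e : CommonEmbedding T T', e.ghpCost ≤ r}

/-- The Gromov–Prokhorov distance `d_{GP}^c`. -/
noncomputable def gpDist (T T' : CMRTree) : ℝ :=
  sInf {r : ℝ | ∃ e : CommonEmbedding T T', e.gpCost ≤ r}


/-!
Since `μ ≥ ℓ`, every ball `B(x, δ)` of a tree carries mass at least `min(δ, μ(𝒱))`: the geodesic
of length `δ` issuing from `x` lies in it, unless the ball is the whole tree. If the
Lévy–Prokhorov distance of the embedded measures is below `δ < μ(𝒱)`, the ball of radius `δ`
around an embedded point therefore has mass exceeding it, so its `δ`-thickening carries mass of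
the other measure, which gives a point of the other tree within `2δ`. If instead `μ(𝒱) ≤ δ`,
the whole tree lies within `δ` of its root. Either way the Hausdorff distance of the images is
at most `d(φρ, φ'ρ') + 2 d_P`, so the GHP cost of any embedding is at most three times its GP
cost.
-/

open MeasureTheory Metric Set

lemma measure_ball_ne_zero_of_levyProkhorovEDist_lt {Ω : Type*} [PseudoMetricSpace Ω]
    [MeasurableSpace Ω] [OpensMeasurableSpace Ω] {ν ν' : Measure Ω} {δ t : ℝ} (hδ : 0 ≤ δ)
    (h : levyProkhorovEDist ν ν' < ENNReal.ofReal δ) {z : Ω}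
    (hz : ENNReal.ofReal δ < ν (ball z t)) : ν' (ball z (δ + t)) ≠ 0 := by
  intro hzero
  have hle := left_measure_le_of_levyProkhorovEDist_lt h (measurableSet_ball (x := z) (ε := t))
  rw [ENNReal.toReal_ofReal hδ, measure_mono_null (thickening_ball z δ t) hzero, zero_add] at hle
  exact hz.not_ge hle

lemma sInf_exists_le_le_mul_sInf {ι : Type*} {f g : ι → ℝ} {c : ℝ} (hc : 0 < c)
    (hf : ∀ i, 0 ≤ f i) (hfg : ∀ i, f i ≤ c * g i) :
    sInf {r | ∃ i, f i ≤ r} ≤ c * sInf {r | ∃ i, g i ≤ r} := by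
  rcases isEmpty_or_nonempty ι with _ | ⟨⟨i₀⟩⟩
  · simp
  rw [← div_le_iff₀' hc]
  refine le_csInf ⟨g i₀, i₀, le_rfl⟩ fun r ⟨i, hi⟩ => ?_
  rw [div_le_iff₀' hc]
  exact csInf_le ⟨0, fun r ⟨j, hj⟩ => (hf j).trans hj⟩ ⟨i, (hfg i).trans (by gcongr)⟩

namespace CMRTree

variable (T : CMRTree)

lemma dist_geod_left {a b : T.V} {s : ℝ} (hs : s ∈ Icc 0 (dist a b)) :
    dist a (T.γ a b s) = s := by
  have h := T.geodIso a b 0 ⟨le_rfl, dist_nonneg⟩ s hs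
  rwa [T.geod0, zero_sub, abs_neg, abs_of_nonneg hs.1] at h

lemma ofReal_dist_le_measure_univ (x y : T.V) : ENNReal.ofReal (dist x y) ≤ T.μ univ :=
  calc ENNReal.ofReal (dist x y) = T.ℓ (T.γ x y '' Ioo 0 (dist x y)) := (T.lenSeg x y).symm
    _ ≤ T.ℓ univ := measure_mono (subset_univ _)
    _ ≤ T.μ univ := T.dom _

lemma min_le_measure_ball (x : T.V) {t : ℝ} (ht : 0 ≤ t) :
    min (ENNReal.ofReal t) (T.μ univ) ≤ T.μ (ball x t) := by
  by_cases hfar : ∃ y, t ≤ dist x y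
  · obtain ⟨y, hy⟩ := hfar
    set b := T.γ x y t
    have hxb : dist x b = t := T.dist_geod_left ⟨ht, hy⟩
    have hsub : T.γ x b '' Ioo 0 (dist x b) ⊆ ball x t := by
      rintro _ ⟨s, hs, rfl⟩
      rw [mem_ball, dist_comm, T.dist_geod_left (Ioo_subset_Icc_self hs)]
      exact hxb ▸ hs.2
    calc min (ENNReal.ofReal t) (T.μ univ) ≤ ENNReal.ofReal t := min_le_left _ _
      _ = T.ℓ (T.γ x b '' Ioo 0 (dist x b)) := by rw [T.lenSeg, hxb]
      _ ≤ T.ℓ (ball x t) := measure_mono hsub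
      _ ≤ T.μ (ball x t) := T.dom _
  · simp only [not_exists, not_le] at hfar
    have hball : ball x t = univ := eq_univ_of_forall fun y => mem_ball'.2 (hfar y)
    rw [hball]
    exact min_le_right _ _

variable {Z : Type*} [MetricSpace Z] [MeasurableSpace Z] [BorelSpace Z]

lemma exists_dist_le_of_levyProkhorovDist_lt (T' : CMRTree) {φ : T.V → Z} {φ' : T'.V → Z}
    (hφ : Isometry φ) (hφ' : Measurable φ') {δ : ℝ}
    (hδ : levyProkhorovDist (T.μ.map φ) (T'.μ.map φ') < δ) (x : T.V) :
    ∃ x', dist (φ x) (φ' x') ≤ dist (φ T.root) (φ' T'.root) + 2 * δ := by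
  have := T.finiteμ
  have := T'.finiteμ
  obtain ⟨δ', hpδ', hδ'δ⟩ := exists_between hδ
  have hδ'0 : 0 ≤ δ' := ENNReal.toReal_nonneg.trans hpδ'.le
  rcases le_or_gt (T.μ univ) (ENNReal.ofReal δ) with hsmall | hlarge
  · refine ⟨T'.root, ?_⟩
    have hx : dist x T.root ≤ δ := (ENNReal.ofReal_le_ofReal_iff (by linarith)).1
      ((T.ofReal_dist_le_measure_univ x T.root).trans hsmall)
    calc dist (φ x) (φ' T'.root) ≤ dist (φ x) (φ T.root) + dist (φ T.root) (φ' T'.root) :=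
          dist_triangle _ _ _
      _ ≤ dist (φ T.root) (φ' T'.root) + 2 * δ := by rw [hφ.dist_eq]; linarith
  · have hedist : levyProkhorovEDist (T.μ.map φ) (T'.μ.map φ') < ENNReal.ofReal δ' :=
      (ENNReal.lt_ofReal_iff_toReal_lt (levyProkhorovEDist_ne_top _ _)).2 hpδ'
    have hball : ENNReal.ofReal δ' < T.μ.map φ (ball (φ x) δ) := by
      rw [Measure.map_apply hφ.continuous.measurable measurableSet_ball, hφ.preimage_ball]
      calc ENNReal.ofReal δ' < ENNReal.ofReal δ :=
            ENNReal.ofReal_lt_ofReal_iff'.2 ⟨hδ'δ, by linarith⟩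
        _ = min (ENNReal.ofReal δ) (T.μ univ) := (min_eq_left hlarge.le).symm
        _ ≤ T.μ (ball x δ) := T.min_le_measure_ball x (by linarith)
    have hne := measure_ball_ne_zero_of_levyProkhorovEDist_lt hδ'0 hedist hball
    rw [Measure.map_apply hφ' measurableSet_ball] at hne
    obtain ⟨x', hx'⟩ := nonempty_of_measure_ne_zero hne
    refine ⟨x', ?_⟩
    rw [mem_preimage, mem_ball'] at hx'
    linarith [dist_nonneg (x := φ T.root) (y := φ' T'.root)]

lemma hausdorffDist_range_le (T' : CMRTree) {φ : T.V → Z} {φ' : T'.V → Z}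
    (hφ : Isometry φ) (hφ' : Isometry φ') :
    hausdorffDist (range φ) (range φ') ≤
      dist (φ T.root) (φ' T'.root) + 2 * levyProkhorovDist (T.μ.map φ) (T'.μ.map φ') := by
  refine le_of_forall_pos_le_add fun ε hε => ?_
  set p := levyProkhorovDist (T.μ.map φ) (T'.μ.map φ')
  have hp : p < p + ε / 2 := by linarith
  have hp' : levyProkhorovDist (T'.μ.map φ') (T.μ.map φ) < p + ε / 2 :=
    levyProkhorovDist_comm (T'.μ.map φ') _ ▸ hp
  have hp0 : 0 ≤ p := ENNReal.toReal_nonneg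
  refine hausdorffDist_le_of_mem_dist (by positivity) ?_ ?_
  · rintro _ ⟨x, rfl⟩
    obtain ⟨x', hx'⟩ :=
      T.exists_dist_le_of_levyProkhorovDist_lt T' hφ hφ'.continuous.measurable hp x
    exact ⟨φ' x', mem_range_self x', by linarith⟩
  · rintro _ ⟨x', rfl⟩
    obtain ⟨x, hx⟩ :=
      T'.exists_dist_le_of_levyProkhorovDist_lt T hφ' hφ.continuous.measurable hp' x'
    rw [dist_comm (φ' T'.root)] at hx
    exact ⟨φ x, mem_range_self x, by linarith⟩

end CMRTree

namespace CommonEmbedding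

variable {T T' : CMRTree} (e : CommonEmbedding T T')

lemma gpCost_nonneg : 0 ≤ e.gpCost :=
  add_nonneg dist_nonneg ENNReal.toReal_nonneg

lemma ghpCost_nonneg : 0 ≤ e.ghpCost :=
  add_nonneg (add_nonneg dist_nonneg hausdorffDist_nonneg) ENNReal.toReal_nonneg

lemma gpCost_le_ghpCost : e.gpCost ≤ e.ghpCost := by
  unfold gpCost ghpCost
  linarith [hausdorffDist_nonneg (s := range e.φ) (t := range e.φ')]

lemma ghpCost_le_three_mul_gpCost : e.ghpCost ≤ 3 * e.gpCost := by
  unfold gpCost ghpCost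
  linarith [T.hausdorffDist_range_le T' e.isom e.isom',
    dist_nonneg (x := e.φ T.root) (y := e.φ' T'.root),
    (ENNReal.toReal_nonneg : 0 ≤ levyProkhorovDist (T.μ.map e.φ) (T'.μ.map e.φ'))]

end CommonEmbedding

/-- on compact rooted measured ℝ-trees whose measure dominates the length
measure, `d_{GP}^c ≤ d_{GHP}^c ≤ 3 d_{GP}^c`. -/
theorem stmt_18 (T T' : CMRTree) :
    gpDist T T' ≤ ghpDist T T' ∧ ghpDist T T' ≤ 3 * gpDist T T' := by
  unfold gpDist ghpDist
  constructor
  · simpa using sInf_exists_le_le_mul_sInf one_pos CommonEmbedding.gpCost_nonneg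
      fun e : CommonEmbedding T T' => by rw [one_mul]; exact e.gpCost_le_ghpCost
  · exact sInf_exists_le_le_mul_sInf three_pos CommonEmbedding.ghpCost_nonneg
      CommonEmbedding.ghpCost_le_three_mul_gpCost
end
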